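/- arXiv:1907.12038 — 4 statements merged into one kernel-verified Lean document; each statement's English description precedes it below -/
import Mathlib

section
/- The function t ↦ Φ(t)·e^{t²/2} is strictly decreasing on (0,∞), where Φ(t) = (2π)^{-1/2} ∫_t^∞ e^{-τ²/2} dτ. -/
/-!
Writing `φ(t) = (2π)^{-1/2} e^{-t²/2}`, the derivative of `Φ(t) e^{t²/2}` is
`e^{t²/2} (t Φ(t) - φ(t))`, so it suffices to have the Mills-ratio bound `t Φ(t) < φ(t)`.
Since `τ e^{-τ²/2}` is the derivative of `-e^{-τ²/2}`, this bound is the statement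
`∫_t^∞ (τ - t) e^{-τ²/2} dτ > 0`. It holds for every real `t`, so the function is in fact
strictly decreasing on all of `ℝ`.
-/

open MeasureTheory

/-- The Gaussian tail function `Φ(t) = (2π)^{-1/2} ∫_t^∞ e^{-τ²/2} dτ`. -/
noncomputable def Phi (t : ℝ) : ℝ :=
  (Real.sqrt (2 * Real.pi))⁻¹ * ∫ τ in Set.Ioi t, Real.exp (-τ^2/2)

open Real Set Filter

theorem hasDerivAt_integral_Ioi {E : Type*} [NormedAddCommGroup E] [NormedSpace ℝ E]
    [CompleteSpace E] {f : ℝ → E} {t : ℝ} (hf : Integrable f) (hft : ContinuousAt f t) :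
    HasDerivAt (fun s => ∫ x in Ioi s, f x) (-f t) t := by
  have hF : HasDerivAt (fun s => ∫ x in (0 : ℝ)..s, f x) (f t) t :=
    intervalIntegral.integral_hasDerivAt_right hf.intervalIntegrable
      hf.aestronglyMeasurable.stronglyMeasurableAtFilter hft
  refine (hF.const_sub (∫ x in Ioi 0, f x)).congr_of_eventuallyEq (.of_forall fun s => ?_)
  dsimp only
  rw [← intervalIntegral.integral_Ioi_sub_Ioi' hf.integrableOn hf.integrableOn, sub_sub_cancel]

theorem integrable_exp_neg_sq_div_two : Integrable fun x : ℝ => exp (-x ^ 2 / 2) := by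
  simpa [neg_div, div_eq_inv_mul] using integrable_exp_neg_mul_sq (b := (2 : ℝ)⁻¹) (by norm_num)

theorem integrable_mul_exp_neg_sq_div_two : Integrable fun x : ℝ => x * exp (-x ^ 2 / 2) := by
  simpa [neg_div, div_eq_inv_mul] using
    integrable_mul_exp_neg_mul_sq (b := (2 : ℝ)⁻¹) (by norm_num)

theorem hasDerivAt_exp_neg_sq_div_two (x : ℝ) :
    HasDerivAt (fun x => exp (-x ^ 2 / 2)) (-x * exp (-x ^ 2 / 2)) x := by
  have h : HasDerivAt (fun x : ℝ => -x ^ 2 / 2) (-x) x :=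
    ((hasDerivAt_pow 2 x).fun_neg.div_const 2).congr_deriv (by simp; ring)
  simpa only [mul_comm] using h.exp

theorem tendsto_exp_neg_sq_div_two_atTop :
    Tendsto (fun x : ℝ => exp (-x ^ 2 / 2)) atTop (nhds 0) := by
  refine tendsto_exp_atBot.comp ?_
  simpa [neg_div] using
    (tendsto_pow_atTop two_ne_zero).atTop_div_const (by norm_num : (0 : ℝ) < 2)

theorem integral_Ioi_mul_exp_neg_sq_div_two (t : ℝ) :
    ∫ x in Ioi t, x * exp (-x ^ 2 / 2) = exp (-t ^ 2 / 2) := by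
  have := integral_Ioi_of_hasDerivAt_of_tendsto' (a := t)
    (fun x _ => by simpa using (hasDerivAt_exp_neg_sq_div_two x).fun_neg)
    integrable_mul_exp_neg_sq_div_two.integrableOn tendsto_exp_neg_sq_div_two_atTop.neg
  simpa using this

theorem mul_integral_Ioi_exp_neg_sq_div_two_lt (t : ℝ) :
    t * ∫ x in Ioi t, exp (-x ^ 2 / 2) < exp (-t ^ 2 / 2) := by
  have hint : IntegrableOn (fun x => (x - t) * exp (-x ^ 2 / 2)) (Ioi t) := by
    simp_rw [sub_mul]
    exact (integrable_mul_exp_neg_sq_div_two.sub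
      (integrable_exp_neg_sq_div_two.const_mul t)).integrableOn
  have hpos : 0 < ∫ x in Ioi t, (x - t) * exp (-x ^ 2 / 2) := by
    have hsupp : Ioi t ⊆ Function.support fun x => (x - t) * exp (-x ^ 2 / 2) :=
      fun x hx => (mul_pos (sub_pos.2 hx) (exp_pos _)).ne'
    rw [setIntegral_pos_iff_support_of_nonneg_ae ?_ hint, inter_eq_self_of_subset_right hsupp]
    · simp
    · filter_upwards [ae_restrict_mem measurableSet_Ioi] with x hx
      exact mul_nonneg (sub_nonneg.2 hx.le) (exp_pos _).le
  simp_rw [sub_mul] at hpos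
  rwa [integral_sub integrable_mul_exp_neg_sq_div_two.integrableOn
    (integrable_exp_neg_sq_div_two.const_mul t).integrableOn, integral_const_mul,
    integral_Ioi_mul_exp_neg_sq_div_two, sub_pos] at hpos

theorem hasDerivAt_Phi (t : ℝ) :
    HasDerivAt Phi (-((√(2 * π))⁻¹ * exp (-t ^ 2 / 2))) t := by
  have := (hasDerivAt_integral_Ioi (t := t) integrable_exp_neg_sq_div_two
    (by fun_prop : Continuous fun x : ℝ => exp (-x ^ 2 / 2)).continuousAt).const_mul (√(2 * π))⁻¹
  rwa [mul_neg] at this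

theorem mul_Phi_lt (t : ℝ) : t * Phi t < (√(2 * π))⁻¹ * exp (-t ^ 2 / 2) := by
  rw [Phi, mul_left_comm]
  exact mul_lt_mul_of_pos_left (mul_integral_Ioi_exp_neg_sq_div_two_lt t) (by positivity)

theorem strictAnti_Phi_mul_exp : StrictAnti fun t => Phi t * exp (t ^ 2 / 2) := by
  have hexp (t : ℝ) : HasDerivAt (fun t => exp (t ^ 2 / 2)) (t * exp (t ^ 2 / 2)) t := by
    have h : HasDerivAt (fun t : ℝ => t ^ 2 / 2) t t :=
      ((hasDerivAt_pow 2 t).div_const 2).congr_deriv (by simp)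
    simpa only [mul_comm] using h.exp
  refine strictAnti_of_hasDerivAt_neg (fun t => (hasDerivAt_Phi t).mul (hexp t)) fun t => ?_
  have hfactor : -((√(2 * π))⁻¹ * exp (-t ^ 2 / 2)) * exp (t ^ 2 / 2)
        + Phi t * (t * exp (t ^ 2 / 2))
      = exp (t ^ 2 / 2) * (t * Phi t - (√(2 * π))⁻¹ * exp (-t ^ 2 / 2)) := by ring
  rw [hfactor]
  exact mul_neg_of_pos_of_neg (exp_pos _) (sub_neg.2 (mul_Phi_lt t))

theorem phi_mul_exp_strictAnti :
    StrictAntiOn (fun t => Phi t * Real.exp (t^2/2)) (Set.Ioi (0:ℝ)) :=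
  strictAnti_Phi_mul_exp.strictAntiOn _
end

section
/- For σ > -1/2 and d > 1, the function Υ_σ(t) = ∫_d^t (τ²-1)^σ log(τ²-1) dτ is asymptotically equivalent to (2/(2σ+1)) t^{2σ+1} log t as t → ∞. -/
/-! Integral form of L'Hôpital's rule: if `f ~ G'` at `+∞` with `G' ≥ 0` and `G → ∞`, then
`∫_d^t f ~ G t`, because the part of `∫ (f - G')` beyond a large `T` is at most `ε ∫ G'`.
Here `(τ² - 1)^σ log (τ² - 1) ~ 2 τ^{2σ} log τ`, the leading term of the derivative of
`G t = (2 / (2σ + 1)) t^{2σ+1} log t`, and `G → ∞` exactly because `2σ + 1 > 0`. -/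

open MeasureTheory Filter Asymptotics Set intervalIntegral

theorem Asymptotics.IsLittleO.intervalIntegral_atTop {E : Type*} [NormedAddCommGroup E]
    [NormedSpace ℝ E] {f : ℝ → E} {g : ℝ → ℝ} {a : ℝ} (h : f =o[atTop] g)
    (hf : ∀ b ≥ a, IntervalIntegrable f volume a b)
    (hg : ∀ b ≥ a, IntervalIntegrable g volume a b) (hg₀ : ∀ᶠ x in atTop, 0 ≤ g x)
    (hg_top : Tendsto (fun t ↦ ∫ x in a..t, g x) atTop atTop) :
    (fun t ↦ ∫ x in a..t, f x) =o[atTop] fun t ↦ ∫ x in a..t, g x := by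
  refine isLittleO_iff.2 fun ε hε ↦ ?_
  obtain ⟨T, haT, hT⟩ : ∃ T ≥ a, ∀ x ≥ T, ‖f x‖ ≤ ε / 2 * g x := by
    obtain ⟨T, hT⟩ := eventually_atTop.1 ((isLittleO_iff.1 h (half_pos hε)).and hg₀)
    refine ⟨max T a, le_max_right _ _, fun x hx ↦ ?_⟩
    obtain ⟨hfx, hgx⟩ := hT x (le_of_max_le_left hx)
    rwa [Real.norm_of_nonneg hgx] at hfx
  set K := ‖∫ x in a..T, f x‖ - ε / 2 * ∫ x in a..T, g x
  have hK : (fun _ ↦ K) =o[atTop] fun t ↦ ∫ x in a..t, g x :=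
    isLittleO_const_left.2 (Or.inr (tendsto_norm_atTop_atTop.comp hg_top))
  filter_upwards [isLittleO_iff.1 hK (half_pos hε), eventually_ge_atTop T,
    hg_top.eventually_ge_atTop 0] with t hKt hTt hgt
  have hTf : IntervalIntegrable f volume T t := (hf T haT).symm.trans (hf t (haT.trans hTt))
  have hTg : IntervalIntegrable g volume T t := (hg T haT).symm.trans (hg t (haT.trans hTt))
  calc ‖∫ x in a..t, f x‖
      = ‖(∫ x in a..T, f x) + ∫ x in T..t, f x‖ := by
        rw [integral_add_adjacent_intervals (hf T haT) hTf]
    _ ≤ ‖∫ x in a..T, f x‖ + ∫ x in T..t, ε / 2 * g x :=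
        (norm_add_le _ _).trans (add_le_add_right (norm_integral_le_of_norm_le hTt
          (ae_of_all _ fun x hx ↦ hT x hx.1.le) (hTg.const_mul _)) _)
    _ = K + ε / 2 * ∫ x in a..t, g x := by
        rw [intervalIntegral.integral_const_mul,
          ← integral_add_adjacent_intervals (hg T haT) hTg]
        ring
    _ ≤ ε / 2 * ‖∫ x in a..t, g x‖ + ε / 2 * ‖∫ x in a..t, g x‖ := by
        rw [Real.norm_of_nonneg hgt] at hKt ⊢
        gcongr
        exact (Real.le_norm_self K).trans hKt
    _ = ε * ‖∫ x in a..t, g x‖ := by ring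

theorem Asymptotics.IsEquivalent.intervalIntegral_atTop_of_hasDerivAt {f g G : ℝ → ℝ}
    {a : ℝ} (h : f ~[atTop] g) (hf : ∀ b ≥ a, IntervalIntegrable f volume a b)
    (hG : ∀ x ≥ a, HasDerivAt G (g x) x) (hg₀ : ∀ x ≥ a, 0 ≤ g x)
    (hG_top : Tendsto G atTop atTop) :
    (fun t ↦ ∫ x in a..t, f x) ~[atTop] G := by
  have hg : ∀ b ≥ a, IntervalIntegrable g volume a b := fun b hb ↦ by
    have hIoo : ∀ x ∈ Ioo (min a b) (max a b), a ≤ x := fun x hx ↦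
      (min_eq_left hb ▸ hx.1).le
    exact intervalIntegrable_deriv_of_nonneg
      (fun x hx ↦ (hG x (uIcc_of_le hb ▸ hx).1).continuousAt.continuousWithinAt)
      (fun x hx ↦ hG x (hIoo x hx)) (fun x hx ↦ hg₀ x (hIoo x hx))
  have hFTC : (fun t ↦ G t - G a) =ᶠ[atTop] fun t ↦ ∫ x in a..t, g x := by
    filter_upwards [eventually_ge_atTop a] with t ht
    exact (integral_eq_sub_of_hasDerivAt (fun x hx ↦ hG x (uIcc_of_le ht ▸ hx).1)
      (hg t ht)).symm
  have hgG : (fun t ↦ ∫ x in a..t, g x) ~[atTop] G :=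
    (IsEquivalent.refl.sub_isLittleO (isLittleO_const_left.2
      (Or.inr (tendsto_norm_atTop_atTop.comp hG_top)))).congr_left hFTC
  have hsub : (fun t ↦ ∫ x in a..t, (f x - g x)) =o[atTop] fun t ↦ ∫ x in a..t, g x :=
    h.isLittleO.intervalIntegral_atTop (fun b hb ↦ (hf b hb).sub (hg b hb)) hg
      (eventually_ge_atTop a |>.mono hg₀) (hgG.symm.tendsto_atTop hG_top)
  refine IsEquivalent.trans (IsLittleO.isEquivalent (hsub.congr' ?_ EventuallyEq.rfl)) hgG
  filter_upwards [eventually_ge_atTop a] with t ht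
  exact integral_sub (hf t ht) (hg t ht)

lemma isEquivalent_sq_sub_one : (fun x : ℝ ↦ x ^ 2 - 1) ~[atTop] fun x ↦ x ^ 2 :=
  IsEquivalent.refl.sub_isLittleO <| isLittleO_const_left.2 <| Or.inr <|
    tendsto_norm_atTop_atTop.comp (tendsto_pow_atTop two_ne_zero)

lemma isEquivalent_rpow_sq_sub_one (σ : ℝ) :
    (fun x : ℝ ↦ (x ^ 2 - 1) ^ σ) ~[atTop] fun x ↦ x ^ (2 * σ) := by
  refine (isEquivalent_sq_sub_one.rpow (fun x ↦ sq_nonneg x)).congr_right ?_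
  filter_upwards [eventually_ge_atTop 0] with x hx
  rw [Pi.pow_apply, ← Real.rpow_natCast, ← Real.rpow_mul hx, Nat.cast_ofNat]

lemma isEquivalent_log_sq_sub_one :
    (fun x : ℝ ↦ Real.log (x ^ 2 - 1)) ~[atTop] fun x ↦ 2 * Real.log x := by
  refine (isEquivalent_sq_sub_one.log (tendsto_pow_atTop two_ne_zero)).congr_right ?_
  filter_upwards with x
  rw [Real.log_pow, Nat.cast_ofNat]

lemma isEquivalent_mul_rpow_mul_log_add {a b r : ℝ} (ha : a ≠ 0) :
    (fun x : ℝ ↦ a * x ^ r * Real.log x + b * x ^ r) ~[atTop]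
      fun x ↦ a * x ^ r * Real.log x := by
  have hb : (fun _ ↦ b) =o[atTop] fun x ↦ a * Real.log x :=
    (isLittleO_const_left.2 <| Or.inr <|
      tendsto_norm_atTop_atTop.comp Real.tendsto_log_atTop).const_mul_right ha
  refine IsEquivalent.refl.add_isLittleO
    (((isBigO_refl (fun x : ℝ ↦ x ^ r) _).mul_isLittleO hb).congr (fun x ↦ mul_comm _ _)
      (fun x ↦ ?_))
  ring

lemma hasDerivAt_mul_rpow_mul_log (c s : ℝ) {x : ℝ} (hx : 0 < x) :
    HasDerivAt (fun t ↦ c * t ^ s * Real.log t)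
      (c * s * x ^ (s - 1) * Real.log x + c * x ^ (s - 1)) x := by
  refine (((Real.hasDerivAt_rpow_const (p := s) (Or.inl hx.ne')).const_mul c).mul
    (Real.hasDerivAt_log hx.ne')).congr_deriv ?_
  rw [Real.rpow_sub_one hx.ne']
  field_simp

theorem Upsilon_asymptotic (σ d : ℝ) (hσ : -(1/2) < σ) (hd : 1 < d) :
    Tendsto (fun t =>
      (∫ τ in d..t, (τ^2 - 1) ^ σ * Real.log (τ^2 - 1))
        / ((2 / (2*σ + 1)) * t ^ (2*σ + 1) * Real.log t)) atTop (nhds 1) := by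
  set c := 2 / (2 * σ + 1)
  have hs : 0 < 2 * σ + 1 := by linarith
  have hc : 0 < c := by positivity
  have hf : (fun τ : ℝ ↦ (τ ^ 2 - 1) ^ σ * Real.log (τ ^ 2 - 1)) ~[atTop]
      fun x ↦ 2 * x ^ (2 * σ) * Real.log x + c * x ^ (2 * σ) :=
    ((isEquivalent_rpow_sq_sub_one σ).mul isEquivalent_log_sq_sub_one).trans
      ((isEquivalent_mul_rpow_mul_log_add two_ne_zero).congr_right
        (.of_eq (funext fun x ↦ by simp only [Pi.mul_apply]; ring))).symm
  have hf_cont :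
      ContinuousOn (fun τ : ℝ ↦ (τ ^ 2 - 1) ^ σ * Real.log (τ ^ 2 - 1)) (Ici d) := by
    have hpos : ∀ τ ∈ Ici d, τ ^ 2 - 1 ≠ 0 := fun τ hτ ↦ by nlinarith [mem_Ici.1 hτ]
    have hcont : ContinuousOn (fun τ : ℝ ↦ τ ^ 2 - 1) (Ici d) := by fun_prop
    exact (hcont.rpow_const fun τ hτ ↦ .inl (hpos τ hτ)).mul (hcont.log hpos)
  refine (isEquivalent_iff_tendsto_one ?_).1 (hf.intervalIntegral_atTop_of_hasDerivAt
    (fun b hb ↦ (hf_cont.mono Icc_subset_Ici_self).intervalIntegrable_of_Icc hb)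
    (fun x hx ↦ ?_) (fun x hx ↦ ?_) ?_)
  · filter_upwards [eventually_gt_atTop 1] with t ht
    have := Real.log_pos ht
    positivity
  · refine (hasDerivAt_mul_rpow_mul_log c (2 * σ + 1) (by linarith)).congr_deriv ?_
    rw [div_mul_cancel₀ _ hs.ne', add_sub_cancel_right]
  · have hx₀ : 0 ≤ x := by linarith
    have := Real.log_nonneg (by linarith : 1 ≤ x)
    positivity
  · simpa only [mul_assoc] using
      ((tendsto_rpow_atTop hs).atTop_mul_atTop₀ Real.tendsto_log_atTop).const_mul_atTop hc
end

section
/- Let β > 0 and N > 0, and let B be a Young function with B(t) = N e^{t^β} for all large t, so that B^{-1}(r) = (log(r/N))^{1/β} for large r. Then, as t → ∞, B^{-1}(1/Φ(t)) = 2^{-1/β} t^{2/β} + (2/β) 2^{-1/β} t^{2/β - 2} log t + o(t^{2/β-2} log t), where Φ is the Gaussian tail function. -/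
/-!
Bounding the Gaussian tail integral between `e^{-t²/2}/(t(1 + t⁻²))` and `e^{-t²/2}/t` (integrate
`τ e^{-τ²/2}` and the derivative of `-e^{-τ²/2}/τ`) gives `log (1/Φ(t)) = t²/2 + log t + O(1)`.
Hence for large `t`, `B⁻¹(1/Φ(t)) = L^{1/β}` with `L = log (1/(N Φ(t))) = (t²/2)(1 + u)` and
`u ~ 2 log t / t² → 0`, and `(1 + u)^{1/β} = 1 + u/β + o(u)` yields the second-order term.
-/

open MeasureTheory Filter

open Set Topology Real

lemma hasDerivAt_exp_neg_sq_half (x : ℝ) :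
    HasDerivAt (fun τ : ℝ => exp (-τ ^ 2 / 2)) (-x * exp (-x ^ 2 / 2)) x := by
  have h : HasDerivAt (fun τ : ℝ => -τ ^ 2 / 2) (-x) x :=
    (((hasDerivAt_pow 2 x).neg).div_const 2).congr_deriv (by norm_num; ring)
  simpa [mul_comm] using h.exp

lemma tendsto_exp_neg_sq_half_atTop : Tendsto (fun τ : ℝ => exp (-τ ^ 2 / 2)) atTop (𝓝 0) := by
  refine tendsto_exp_atBot.comp ?_
  simpa [Function.comp_def, neg_div] using tendsto_neg_atTop_atBot.comp
    ((tendsto_pow_atTop two_ne_zero).atTop_div_const (two_pos : (0 : ℝ) < 2))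

lemma integrableOn_exp_neg_sq_half (s : Set ℝ) :
    IntegrableOn (fun τ : ℝ => exp (-τ ^ 2 / 2)) s := by
  simpa [neg_div, div_eq_inv_mul] using
    (integrable_exp_neg_mul_sq (b := 1 / 2) (by norm_num)).integrableOn

lemma integral_Ioi_exp_neg_sq_half_le {t : ℝ} (ht : 0 < t) :
    ∫ τ in Ioi t, exp (-τ ^ 2 / 2) ≤ exp (-t ^ 2 / 2) / t := by
  have hderiv : ∀ x ∈ Ici t, HasDerivAt (fun τ => -exp (-τ ^ 2 / 2)) (x * exp (-x ^ 2 / 2)) x :=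
    fun x _ => (hasDerivAt_exp_neg_sq_half x).fun_neg.congr_deriv (by ring)
  have hnonneg : ∀ x ∈ Ioi t, 0 ≤ x * exp (-x ^ 2 / 2) :=
    fun x hx => mul_nonneg (ht.trans hx).le (exp_pos _).le
  have hlim : Tendsto (fun τ : ℝ => -exp (-τ ^ 2 / 2)) atTop (𝓝 0) := by
    simpa using tendsto_exp_neg_sq_half_atTop.neg
  have hint := integrableOn_Ioi_deriv_of_nonneg' hderiv hnonneg hlim
  have hval := integral_Ioi_of_hasDerivAt_of_nonneg' hderiv hnonneg hlim
  calc ∫ τ in Ioi t, exp (-τ ^ 2 / 2)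
      ≤ ∫ τ in Ioi t, τ * exp (-τ ^ 2 / 2) / t := by
        refine setIntegral_mono_on (integrableOn_exp_neg_sq_half _) (hint.div_const t)
          measurableSet_Ioi fun x hx => ?_
        rw [le_div_iff₀ ht, mul_comm]
        exact mul_le_mul_of_nonneg_right (le_of_lt hx) (exp_pos _).le
    _ = exp (-t ^ 2 / 2) / t := by rw [integral_div, hval]; simp

lemma exp_neg_sq_half_div_le_integral_Ioi {t : ℝ} (ht : 0 < t) :
    exp (-t ^ 2 / 2) / t ≤ (1 + 1 / t ^ 2) * ∫ τ in Ioi t, exp (-τ ^ 2 / 2) := by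
  have hderiv : ∀ x ∈ Ici t, HasDerivAt (fun τ => -(exp (-τ ^ 2 / 2) / τ))
      ((1 + 1 / x ^ 2) * exp (-x ^ 2 / 2)) x := fun x hx => by
    have hx : x ≠ 0 := (ht.trans_le hx).ne'
    exact ((hasDerivAt_exp_neg_sq_half x).div (hasDerivAt_id x) hx).fun_neg.congr_deriv
      (by simp only [id]; field_simp; ring)
  have hnonneg : ∀ x ∈ Ioi t, 0 ≤ (1 + 1 / x ^ 2) * exp (-x ^ 2 / 2) := fun x _ => by positivity
  have hlim : Tendsto (fun τ : ℝ => -(exp (-τ ^ 2 / 2) / τ)) atTop (𝓝 0) := by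
    simpa using (tendsto_exp_neg_sq_half_atTop.div_atTop tendsto_id).neg
  calc exp (-t ^ 2 / 2) / t = ∫ τ in Ioi t, (1 + 1 / τ ^ 2) * exp (-τ ^ 2 / 2) := by
        rw [integral_Ioi_of_hasDerivAt_of_nonneg' hderiv hnonneg hlim]; ring
    _ ≤ ∫ τ in Ioi t, (1 + 1 / t ^ 2) * exp (-τ ^ 2 / 2) := by
        refine setIntegral_mono_on (integrableOn_Ioi_deriv_of_nonneg' hderiv hnonneg hlim)
          ((integrableOn_exp_neg_sq_half _).const_mul _) measurableSet_Ioi fun x hx => ?_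
        have htx : t ≤ x := le_of_lt hx
        gcongr
    _ = (1 + 1 / t ^ 2) * ∫ τ in Ioi t, exp (-τ ^ 2 / 2) := integral_const_mul _ _

lemma integral_Ioi_exp_neg_sq_half_pos {t : ℝ} (ht : 0 < t) :
    0 < ∫ τ in Ioi t, exp (-τ ^ 2 / 2) :=
  pos_of_mul_pos_right ((div_pos (exp_pos _) ht).trans_le
    (exp_neg_sq_half_div_le_integral_Ioi ht)) (by positivity)

lemma tendsto_mul_exp_mul_integral_Ioi_exp_neg_sq_half :
    Tendsto (fun t : ℝ => t * exp (t ^ 2 / 2) * ∫ τ in Ioi t, exp (-τ ^ 2 / 2)) atTop (𝓝 1) := by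
  have hlow : Tendsto (fun t : ℝ => (1 + 1 / t ^ 2)⁻¹) atTop (𝓝 1) := by
    simpa using (((tendsto_const_nhds (x := (1 : ℝ))).div_atTop
      (tendsto_pow_atTop two_ne_zero)).const_add (1 : ℝ)).inv₀ (by norm_num)
  have hexp {t : ℝ} (ht : 0 < t) : t * exp (t ^ 2 / 2) * (exp (-t ^ 2 / 2) / t) = 1 := by
    rw [neg_div, exp_neg]; field_simp
  refine tendsto_of_tendsto_of_tendsto_of_le_of_le' hlow tendsto_const_nhds ?_ ?_ <;>
    filter_upwards [eventually_gt_atTop 0] with t ht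
  · calc (1 + 1 / t ^ 2)⁻¹
        = (1 + 1 / t ^ 2)⁻¹ * (t * exp (t ^ 2 / 2) * (exp (-t ^ 2 / 2) / t)) := by
          rw [hexp ht, mul_one]
      _ ≤ (1 + 1 / t ^ 2)⁻¹ * (t * exp (t ^ 2 / 2) *
            ((1 + 1 / t ^ 2) * ∫ τ in Ioi t, exp (-τ ^ 2 / 2))) := by
          gcongr; exact exp_neg_sq_half_div_le_integral_Ioi ht
      _ = t * exp (t ^ 2 / 2) * ∫ τ in Ioi t, exp (-τ ^ 2 / 2) := by field_simp
  · calc t * exp (t ^ 2 / 2) * ∫ τ in Ioi t, exp (-τ ^ 2 / 2)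
        ≤ t * exp (t ^ 2 / 2) * (exp (-t ^ 2 / 2) / t) := by
          gcongr; exact integral_Ioi_exp_neg_sq_half_le ht
      _ = 1 := hexp ht

lemma Phi_pos {t : ℝ} (ht : 0 < t) : 0 < Phi t := by
  have := integral_Ioi_exp_neg_sq_half_pos ht
  unfold Phi
  positivity

lemma tendsto_log_inv_Phi_sub_sq_half_sub_log :
    Tendsto (fun t => log (1 / Phi t) - t ^ 2 / 2 - log t) atTop (𝓝 (log √(2 * π))) := by
  have h := (tendsto_mul_exp_mul_integral_Ioi_exp_neg_sq_half.log one_ne_zero).const_sub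
    (log √(2 * π))
  rw [log_one, sub_zero] at h
  refine h.congr' ?_
  filter_upwards [eventually_gt_atTop 0] with t ht
  have hG := integral_Ioi_exp_neg_sq_half_pos ht
  have hc : 0 < √(2 * π) := by positivity
  unfold Phi
  rw [one_div, log_inv, log_mul (inv_pos.2 hc).ne' hG.ne', log_inv,
    log_mul (mul_pos ht (exp_pos _)).ne' hG.ne', log_mul ht.ne' (exp_pos _).ne', log_exp]
  ring

lemma tendsto_inv_Phi_atTop : Tendsto (fun t => 1 / Phi t) atTop atTop := by
  have hquad : Tendsto (fun t : ℝ => t ^ 2 / 2 + log t) atTop atTop :=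
    ((tendsto_pow_atTop two_ne_zero).atTop_div_const two_pos).atTop_add_atTop tendsto_log_atTop
  refine (tendsto_exp_atTop.comp
    (tendsto_log_inv_Phi_sub_sq_half_sub_log.add_atTop hquad)).congr' ?_
  filter_upwards [eventually_gt_atTop 0] with t ht
  have := Phi_pos ht
  simp only [Function.comp_apply, sub_sub, sub_add_cancel]
  exact exp_log (by positivity)

lemma tendsto_log_inv_Phi_div_sub_sq_half_div_log {N : ℝ} (hN : N ≠ 0) :
    Tendsto (fun t => (log (1 / Phi t / N) - t ^ 2 / 2) / log t) atTop (𝓝 1) := by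
  have h := ((tendsto_log_inv_Phi_sub_sq_half_sub_log.sub_const (log N)).mul
    (tendsto_inv_atTop_zero.comp tendsto_log_atTop)).const_add 1
  rw [mul_zero, add_zero] at h
  refine h.congr' ?_
  filter_upwards [eventually_gt_atTop 1] with t ht
  have := Phi_pos (zero_lt_one.trans ht)
  rw [Function.comp_apply, log_div (by positivity) hN]
  field_simp [(log_pos ht).ne']
  ring

lemma tendsto_one_add_rpow_sub_one_div {α : Type*} {l : Filter α} {u : α → ℝ}
    (hu : Tendsto u l (𝓝[≠] 0)) (p : ℝ) :
    Tendsto (fun x => ((1 + u x) ^ p - 1) / u x) l (𝓝 p) := by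
  have hd : HasDerivAt (fun x : ℝ => x ^ p) p 1 := by
    simpa using hasDerivAt_rpow_const (x := 1) (p := p) (Or.inl one_ne_zero)
  simpa [div_eq_inv_mul, Function.comp_def] using
    (hasDerivAt_iff_tendsto_slope_zero.mp hd).comp hu

lemma sq_div_two_rpow {t : ℝ} (ht : 0 ≤ t) (p : ℝ) :
    (t ^ 2 / 2) ^ p = 2 ^ (-p) * t ^ (2 * p) := by
  rw [div_rpow (by positivity) zero_le_two, rpow_neg zero_le_two, ← rpow_natCast, ← rpow_mul ht]
  push_cast
  ring

lemma tendsto_log_div_sq_half_atTop : Tendsto (fun t : ℝ => log t / (t ^ 2 / 2)) atTop (𝓝 0) := by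
  have h := (tendsto_pow_log_div_mul_add_atTop 1 0 1 one_ne_zero).mul
    (tendsto_inv_atTop_zero.const_mul 2)
  rw [mul_zero, zero_mul] at h
  refine h.congr' ?_
  filter_upwards [eventually_gt_atTop 0] with t ht
  field_simp
  ring

lemma tendsto_rpow_sub_div_of_tendsto_sub_sq_half_div_log {β : ℝ} (hβ : β ≠ 0) {L : ℝ → ℝ}
    (hL : Tendsto (fun t => (L t - t ^ 2 / 2) / log t) atTop (𝓝 1)) :
    Tendsto (fun t => (L t ^ (1 / β) - (2 : ℝ) ^ (-1 / β) * t ^ (2 / β))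
      / ((2 / β) * (2 : ℝ) ^ (-1 / β) * t ^ (2 / β - 2) * log t)) atTop (𝓝 1) := by
  set R : ℝ → ℝ := fun t => (L t - t ^ 2 / 2) / log t
  set u : ℝ → ℝ := fun t => (L t - t ^ 2 / 2) / (t ^ 2 / 2)
  have hRpos : ∀ᶠ t in atTop, 0 < R t := hL.eventually_const_lt one_pos
  have huR : ∀ᶠ t in atTop, u t = R t * (log t / (t ^ 2 / 2)) := by
    filter_upwards [eventually_gt_atTop 1] with t ht
    simp only [u, R]
    field_simp [(log_pos ht).ne']
  have hupos : ∀ᶠ t in atTop, 0 < u t := by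
    filter_upwards [huR, hRpos, eventually_gt_atTop 1] with t h hR ht
    rw [h]
    have := log_pos ht
    positivity
  have hu : Tendsto u atTop (𝓝[≠] 0) := by
    refine tendsto_nhdsWithin_iff.mpr ⟨?_, hupos.mono fun t h => h.ne'⟩
    simpa using (hL.mul tendsto_log_div_sq_half_atTop).congr' (huR.mono fun t h => h.symm)
  -- The quotient equals `((1 + u)^{1/β} - 1) / u * β * R`, because `u = R log t / (t²/2)`.
  have hmain := ((tendsto_one_add_rpow_sub_one_div hu (1 / β)).mul_const β).mul hL
  rw [one_div_mul_cancel hβ, one_mul] at hmain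
  refine hmain.congr' ?_
  filter_upwards [hupos, eventually_gt_atTop 1] with t hu ht
  have ht0 : 0 < t := zero_lt_one.trans ht
  have hlogt : log t ≠ 0 := (log_pos ht).ne'
  have hLu : L t = t ^ 2 / 2 * (1 + u t) := by simp only [u]; field_simp; ring
  have hRu : R t = u t * (t ^ 2 / 2) / log t := by simp only [u, R]; field_simp
  rw [hRu, hLu, mul_rpow (by positivity) (by positivity), sq_div_two_rpow ht0.le, mul_one_div,
    rpow_sub ht0, rpow_two, neg_div]
  have hc : (2 : ℝ) ^ (-(1 / β)) ≠ 0 := (rpow_pos_of_pos two_pos _).ne'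
  have hX : t ^ (2 / β) ≠ 0 := (rpow_pos_of_pos ht0 _).ne'
  generalize (1 + u t) ^ (1 / β) = q at *
  generalize (2 : ℝ) ^ (-(1 / β)) = c at *
  generalize t ^ (2 / β) = X at *
  field_simp

theorem Binv_phi_asymptotic_general (β N t₀ : ℝ) (hβ : 0 < β) (hN : 0 < N)
    (Binv : ℝ → ℝ)
    (hBinv : ∀ r > N * Real.exp (t₀ ^ β), Binv r = (Real.log (r / N)) ^ (1/β)) :
    Tendsto (fun t =>
      (Binv (1 / Phi t) - (2:ℝ) ^ (-1/β) * t ^ (2/β))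
        / ((2/β) * (2:ℝ) ^ (-1/β) * t ^ (2/β - 2) * Real.log t)) atTop (nhds 1) := by
  refine (tendsto_rpow_sub_div_of_tendsto_sub_sq_half_div_log hβ.ne'
    (tendsto_log_inv_Phi_div_sub_sq_half_div_log hN.ne')).congr' ?_
  filter_upwards [tendsto_inv_Phi_atTop.eventually_gt_atTop (N * exp (t₀ ^ β))] with t ht
  rw [hBinv _ ht]

theorem Binv_phi_asymptotic (β N t₀ : ℝ) (hβ : 0 < β) (hN : 0 < N) (ht₀ : 0 < t₀)
    (B Binv : ℝ → ℝ)
    (hBconv : ConvexOn ℝ (Set.Ici 0) B) (hB0 : B 0 = 0)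
    (hBform : ∀ t > t₀, B t = N * Real.exp (t ^ β))
    (hBinv : ∀ r > N * Real.exp (t₀ ^ β), Binv r = (Real.log (r / N)) ^ (1/β)) :
    Tendsto (fun t =>
      (Binv (1 / Phi t) - (2:ℝ) ^ (-1/β) * t ^ (2/β))
        / ((2/β) * (2:ℝ) ^ (-1/β) * t ^ (2/β - 2) * Real.log t)) atTop (nhds 1) :=
  Binv_phi_asymptotic_general β N t₀ hβ hN Binv hBinv
end

section
/- The function u : ℝⁿ → ℝ defined by u(x) = x₁ (the first coordinate) satisfies: u has mean value 0 and median 0 with respect to the standard Gaussian measure γₙ, |∇u| = 1 everywhere, and ∫_{ℝⁿ} e^{u²/2} dγₙ = ∞. In particular, the constant κ = 1/√2 is not attained in the Gaussian exponential-square inequality under the gradient constraint ‖∇u‖_{L^∞} ≤ 1. -/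
open MeasureTheory Real Module
open scoped ENNReal

/-!
The Gaussian density is even, so `γₙ` is invariant under `x ↦ -x`; the odd function `x₁` therefore
has mean `0`, and `γₙ {x₁ > 0} = γₙ {x₁ < 0}` forces the median to be `0`. The gradient of `x₁` is
the unit vector `e₁`. Finally `e^{x₁²/2}` cancels the `x₁`-dependence of the density, leaving
`(2π)^{-n/2} e^{-(x₂² + ⋯ + xₙ²)/2}`, which is bounded below on the slab
`{|xⱼ| ≤ 1 for j ≠ 1}` of infinite Lebesgue measure.
-/

section OddFunction

variable {G F : Type*} [MeasurableSpace G] [AddGroup G] [MeasurableNeg G] {μ : Measure G}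
  [μ.IsNegInvariant]

theorem integral_eq_zero_of_odd [NormedAddCommGroup F] [NormedSpace ℝ F] {f : G → F}
    (hf : ∀ x, f (-x) = -f x) : ∫ x, f x ∂μ = 0 := by
  have h := integral_neg_eq_self f μ
  simp_rw [hf, integral_neg] at h
  linear_combination (norm := module) (-(2 : ℝ)⁻¹) • h

theorem measure_neg_eq_measure_pos_of_odd {f : G → ℝ} (hf : ∀ x, f (-x) = -f x) :
    μ {x | f x < 0} = μ {x | 0 < f x} := by
  rw [← Measure.measure_preimage_neg μ {x | 0 < f x}]
  congr 1
  ext x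
  simp [hf]

variable [IsProbabilityMeasure μ] {f : G → ℝ}

theorem measure_neg_le_half_of_odd (hfm : Measurable f) (hf : ∀ x, f (-x) = -f x) :
    μ {x | f x < 0} ≤ 1 / 2 := by
  have hdisj : Disjoint {x | f x < 0} {x | 0 < f x} :=
    Set.disjoint_left.mpr fun _ (hneg : f _ < 0) (hpos : 0 < f _) => hneg.not_gt hpos
  have htwo : 2 * μ {x | f x < 0} ≤ 1 := by
    calc 2 * μ {x | f x < 0} = μ {x | f x < 0} + μ {x | 0 < f x} := by
          rw [two_mul, measure_neg_eq_measure_pos_of_odd hf]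
      _ = μ ({x | f x < 0} ∪ {x | 0 < f x}) :=
          (measure_union hdisj (measurableSet_lt measurable_const hfm)).symm
      _ ≤ 1 := prob_le_one
  rwa [ENNReal.le_div_iff_mul_le (by norm_num) (by norm_num), mul_comm]

theorem measure_pos_le_half_of_odd (hfm : Measurable f) (hf : ∀ x, f (-x) = -f x) :
    μ {x | 0 < f x} ≤ 1 / 2 :=
  measure_neg_eq_measure_pos_of_odd (μ := μ) hf ▸ measure_neg_le_half_of_odd hfm hf

theorem half_le_measure_nonneg_of_odd (hfm : Measurable f) (hf : ∀ x, f (-x) = -f x) :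
    1 / 2 ≤ μ {x | 0 ≤ f x} := by
  have hcompl : {x | 0 ≤ f x} = {x | f x < 0}ᶜ := by ext x; simp
  rw [hcompl, prob_compl_eq_one_sub (measurableSet_lt hfm measurable_const)]
  calc (1 / 2 : ℝ≥0∞) = 1 - 1 / 2 := by simp [ENNReal.one_sub_inv_two]
    _ ≤ 1 - μ {x | f x < 0} := by gcongr; exact measure_neg_le_half_of_odd hfm hf

end OddFunction

theorem isNegInvariant_withDensity {G : Type*} [MeasurableSpace G] [InvolutiveNeg G]
    [MeasurableNeg G] (μ : Measure G) [μ.IsNegInvariant] {ρ : G → ℝ≥0∞}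
    (hρ : ∀ x, ρ (-x) = ρ x) : (μ.withDensity ρ).IsNegInvariant := by
  refine ⟨Measure.ext fun s hs => ?_⟩
  rw [Measure.neg_apply, withDensity_apply _ hs.neg, withDensity_apply _ hs,
    ← lintegral_indicator hs.neg, ← lintegral_indicator hs, ← lintegral_neg_eq_self]
  congr 1
  ext x
  by_cases hx : x ∈ s <;> simp [hx, hρ]

theorem EuclideanSpace.norm_proj {𝕜 ι : Type*} [RCLike 𝕜] [Fintype ι] (i : ι) :
    ‖(EuclideanSpace.proj i : EuclideanSpace 𝕜 ι →L[𝕜] 𝕜)‖ = 1 := by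
  classical
  have h : (EuclideanSpace.proj i : EuclideanSpace 𝕜 ι →L[𝕜] 𝕜) =
      innerSL 𝕜 (EuclideanSpace.single i 1) := by
    ext x
    simp [EuclideanSpace.inner_single_left]
  rw [h, innerSL_apply_norm, PiLp.norm_single, norm_one]

section StdGaussian

variable (E : Type*) [NormedAddCommGroup E] [InnerProductSpace ℝ E]

noncomputable def stdGaussianDensity (x : E) : ℝ :=
  (2 * π) ^ (-(finrank ℝ E : ℝ) / 2) * exp (-‖x‖ ^ 2 / 2)

variable {E} in
theorem stdGaussianDensity_pos (x : E) : 0 < stdGaussianDensity E x := by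
  unfold stdGaussianDensity; positivity

variable {E} in
theorem stdGaussianDensity_neg (x : E) : stdGaussianDensity E (-x) = stdGaussianDensity E x := by
  simp [stdGaussianDensity]

@[fun_prop]
theorem continuous_stdGaussianDensity : Continuous (stdGaussianDensity E) := by
  unfold stdGaussianDensity; fun_prop

variable [MeasurableSpace E] [BorelSpace E] [FiniteDimensional ℝ E]

theorem integral_stdGaussianDensity : ∫ x, stdGaussianDensity E x = 1 := by
  have h := GaussianFourier.integral_rexp_neg_mul_sq_norm (V := E) (by norm_num : (0 : ℝ) < 1 / 2)
  have : (fun x : E => exp (-‖x‖ ^ 2 / 2)) = fun x => exp (-(1 / 2) * ‖x‖ ^ 2) := by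
    ext x; ring_nf
  unfold stdGaussianDensity
  rw [integral_const_mul, this, h, div_div_eq_mul_div, div_one, mul_comm π,
    ← rpow_add (by positivity), neg_div, neg_add_cancel, rpow_zero]

noncomputable def stdGaussianMeasure : Measure E :=
  volume.withDensity fun x => ENNReal.ofReal (stdGaussianDensity E x)

instance : IsProbabilityMeasure (stdGaussianMeasure E) := by
  have hint : Integrable (stdGaussianDensity E) :=
    Integrable.of_integral_ne_zero (by simp [integral_stdGaussianDensity])
  constructor
  rw [stdGaussianMeasure, withDensity_apply _ MeasurableSet.univ, Measure.restrict_univ,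
    ← ofReal_integral_eq_lintegral_ofReal hint
      (ae_of_all _ fun x => (stdGaussianDensity_pos x).le), integral_stdGaussianDensity,
    ENNReal.ofReal_one]

instance : (stdGaussianMeasure E).IsNegInvariant :=
  isNegInvariant_withDensity _ fun x => by rw [stdGaussianDensity_neg]

end StdGaussian

section Slab

variable {ι : Type*} [Fintype ι]

theorem volume_setOf_forall_ne_abs_le_one (i : ι) :
    volume {x : EuclideanSpace ℝ ι | ∀ j ≠ i, |x j| ≤ 1} = ⊤ := by
  classical
  let box : ι → Set ℝ := fun j => if j = i then Set.univ else Set.Icc (-1) 1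
  have hS : {x : EuclideanSpace ℝ ι | ∀ j ≠ i, |x j| ≤ 1} = WithLp.ofLp ⁻¹' Set.univ.pi box := by
    ext x
    simp only [Set.mem_ofPred_eq, Set.mem_preimage, Set.mem_univ_pi, box]
    refine forall_congr' fun j => ?_
    by_cases hj : j = i <;> simp [hj, abs_le]
  have hbox : MeasurableSet (Set.univ.pi box) :=
    MeasurableSet.univ_pi fun j => by by_cases hj : j = i <;> simp [box, hj, measurableSet_Icc]
  rw [hS, (PiLp.volume_preserving_ofLp ι).measure_preimage hbox.nullMeasurableSet, volume_pi_pi,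
    ← Finset.mul_prod_erase _ _ (Finset.mem_univ i)]
  simp only [box, if_pos rfl, Real.volume_univ]
  refine ENNReal.top_mul (Finset.prod_ne_zero_iff.mpr fun j hj => ?_)
  rw [if_neg (Finset.ne_of_mem_erase hj), Real.volume_Icc]
  norm_num

theorem sq_norm_sub_sq_apply_le_card (i : ι) {x : EuclideanSpace ℝ ι}
    (hx : ∀ j ≠ i, |x j| ≤ 1) : ‖x‖ ^ 2 - x i ^ 2 ≤ Fintype.card ι := by
  classical
  rw [EuclideanSpace.real_norm_sq_eq, ← Finset.sum_erase_eq_sub (Finset.mem_univ i)]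
  calc ∑ j ∈ Finset.univ.erase i, x j ^ 2 ≤ ∑ j ∈ Finset.univ.erase i, (1 : ℝ) :=
        Finset.sum_le_sum fun j hj => by
          simpa using pow_le_pow_left₀ (abs_nonneg _) (hx j (Finset.ne_of_mem_erase hj)) 2
    _ ≤ ∑ _j : ι, (1 : ℝ) :=
        Finset.sum_le_sum_of_subset_of_nonneg (Finset.erase_subset _ _) fun _ _ _ => zero_le_one
    _ = Fintype.card ι := by simp

theorem lintegral_exp_sq_apply_div_two_stdGaussianMeasure (i : ι) :
    ∫⁻ x, ENNReal.ofReal (exp (x i ^ 2 / 2)) ∂(stdGaussianMeasure (EuclideanSpace ℝ ι)) = ⊤ := by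
  set S := {x : EuclideanSpace ℝ ι | ∀ j ≠ i, |x j| ≤ 1}
  set c := (2 * π) ^ (-(Fintype.card ι : ℝ) / 2) * exp (-(Fintype.card ι : ℝ) / 2)
  have hc : 0 < c := by positivity
  have hS : MeasurableSet S := by
    simp only [S, Set.ofPred_forall]
    exact MeasurableSet.iInter fun j => MeasurableSet.iInter fun _ =>
      measurableSet_le (by fun_prop) measurable_const
  have hbound : ∀ x ∈ S, c ≤ stdGaussianDensity _ x * exp (x i ^ 2 / 2) := by
    intro x hx
    rw [stdGaussianDensity, finrank_euclideanSpace, mul_assoc, ← exp_add]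
    dsimp only [c]
    gcongr
    linarith [sq_norm_sub_sq_apply_le_card i hx]
  rw [stdGaussianMeasure, lintegral_withDensity_eq_lintegral_mul _ (by fun_prop) (by fun_prop),
    eq_top_iff]
  calc ⊤ = ∫⁻ _ in S, ENNReal.ofReal c := by
        rw [setLIntegral_const, volume_setOf_forall_ne_abs_le_one,
          ENNReal.mul_top (by simpa using hc)]
    _ ≤ ∫⁻ x in S, ENNReal.ofReal (stdGaussianDensity _ x) * ENNReal.ofReal (exp (x i ^ 2 / 2)) := by
        refine setLIntegral_mono (by fun_prop) fun x hx => ?_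
        rw [← ENNReal.ofReal_mul (stdGaussianDensity_pos x).le]
        exact ENNReal.ofReal_le_ofReal (hbound x hx)
    _ ≤ _ := setLIntegral_le_lintegral _ _

end Slab

theorem first_coordinate_extremal (n : ℕ) (hn : 1 ≤ n)
    (γ : Measure (EuclideanSpace ℝ (Fin n)))
    (hγ : γ = (volume : Measure (EuclideanSpace ℝ (Fin n))).withDensity
      (fun x => ENNReal.ofReal ((2 * Real.pi) ^ (-(n:ℝ)/2) * Real.exp (-‖x‖^2/2))))
    (u : EuclideanSpace ℝ (Fin n) → ℝ) (hu : ∀ x, u x = x ⟨0, hn⟩) :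
    (∫ x, u x ∂γ) = 0 ∧
    γ {x | 0 < u x} ≤ 1/2 ∧ (1/2 : ℝ≥0∞) ≤ γ {x | 0 ≤ u x} ∧
    (∀ x, ‖fderiv ℝ u x‖ = 1) ∧
    (∫⁻ x, ENNReal.ofReal (Real.exp ((u x)^2 / 2)) ∂γ) = ⊤ := by
  have hγ_std : γ = stdGaussianMeasure (EuclideanSpace ℝ (Fin n)) := by
    simp only [hγ, stdGaussianMeasure, stdGaussianDensity, finrank_euclideanSpace_fin]
  have hu_proj : u = EuclideanSpace.proj (𝕜 := ℝ) (⟨0, hn⟩ : Fin n) := funext hu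
  have hu_odd : ∀ x, u (-x) = -u x := by simp [hu]
  have hu_meas : Measurable u := hu_proj ▸ (EuclideanSpace.proj _).continuous.measurable
  subst hγ_std
  refine ⟨integral_eq_zero_of_odd hu_odd, measure_pos_le_half_of_odd hu_meas hu_odd,
    half_le_measure_nonneg_of_odd hu_meas hu_odd, fun x => ?_, ?_⟩
  · rw [hu_proj, ContinuousLinearMap.fderiv, EuclideanSpace.norm_proj]
  · simpa only [hu] using lintegral_exp_sq_apply_div_two_stdGaussianMeasure _
end
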